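/- Sewing lemma with a control: Let E be a Banach space, ω a control on [0,1], θ > 1 and c₁ > 0, and let μ = (μ_{ts})_{0 ≤ s ≤ t ≤ 1} be a family of elements of E such that ‖μ_{ts} − (μ_{tu} + μ_{us})‖ ≤ c₁ ω(s,t)^θ for all 0 ≤ s ≤ u ≤ t ≤ 1. Then there exists a constant C (depending only on c₁ and θ) and a unique function φ : [0,1] → E with φ₀ = 0 such that ‖φ_t − φ_s − μ_{ts}‖ ≤ C ω(s,t)^θ for all 0 ≤ s ≤ t ≤ 1; uniqueness means that any two functions vanishing at 0 and satisfying such a bound (with possibly different constants) coincide. -/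

import Mathlib

/-!
Riemann sums of `μ` along the dyadic grid clamped to `[s, t]` converge as the grid is refined.
By Young's point-removal argument, the sum of `μ` along any partition of `[a, b]` lies within
`c₁ K_θ ω(a, b)^θ` of `μ_{ba}`, with `K_θ = ∑ (2 / r)^θ < ∞`. Applied cell by cell, this shows
that refining the level-`m` grid moves the sum by at most `c₁ K_θ ∑_cells ω^θ`, and
`∑_cells ω^θ ≤ (max_cells ω)^(θ - 1) ω(s, t) → 0` because `ω` is uniformly continuous and vanishes
on the diagonal. The limit `φ_t` of the sums over `[0, t]` inherits the bound, since clamping one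
common grid makes the sums over `[0, s]` and `[s, t]` add up to the sum over `[0, t]` up to
`c₁ ∑_cells ω^θ`. The same vanishing of `∑_cells ω^θ` shows that a function whose increments are
`O(ω^θ)` is constant, which gives uniqueness.
-/

open Finset Filter Topology

namespace Sewing

theorem rpow_le_rpow_sub_one_mul {x η θ : ℝ} (hx : 0 ≤ x) (hxη : x ≤ η) (hθ : 1 ≤ θ) :
    x ^ θ ≤ η ^ (θ - 1) * x :=
  calc x ^ θ = x ^ (θ - 1) * x := by
        rw [← Real.rpow_add_one' hx (by linarith), sub_add_cancel]
    _ ≤ η ^ (θ - 1) * x := by gcongr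

structure Superadditive (ω : ℝ → ℝ → ℝ) : Prop where
  nonneg : ∀ s t : ℝ, 0 ≤ s → s ≤ t → t ≤ 1 → 0 ≤ ω s t
  add_le : ∀ s u t : ℝ, 0 ≤ s → s ≤ u → u ≤ t → t ≤ 1 → ω s u + ω u t ≤ ω s t

namespace Superadditive

variable {ω : ℝ → ℝ → ℝ} {q : ℕ → ℝ}

theorem self_eq_zero (hω : Superadditive ω) {s : ℝ} (h0 : 0 ≤ s) (h1 : s ≤ 1) : ω s s = 0 :=
  le_antisymm (by linarith [hω.add_le s s s h0 le_rfl le_rfl h1]) (hω.nonneg s s h0 le_rfl h1)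

theorem seq_nonneg (hω : Superadditive ω) (hq : Monotone q) (hq01 : ∀ i, q i ∈ Set.Icc 0 1)
    {i j : ℕ} (hij : i ≤ j) : 0 ≤ ω (q i) (q j) :=
  hω.nonneg _ _ (hq01 i).1 (hq hij) (hq01 j).2

theorem seq_add_le (hω : Superadditive ω) (hq : Monotone q) (hq01 : ∀ i, q i ∈ Set.Icc 0 1)
    {i j k : ℕ} (hij : i ≤ j) (hjk : j ≤ k) : ω (q i) (q j) + ω (q j) (q k) ≤ ω (q i) (q k) :=
  hω.add_le _ _ _ (hq01 i).1 (hq hij) (hq hjk) (hq01 k).2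

theorem sum_le (hω : Superadditive ω) (hq : Monotone q) (hq01 : ∀ i, q i ∈ Set.Icc 0 1)
    (N : ℕ) : ∑ i ∈ range N, ω (q i) (q (i + 1)) ≤ ω (q 0) (q N) := by
  induction N with
  | zero => simpa using hω.seq_nonneg hq hq01 le_rfl
  | succ N ih =>
    rw [sum_range_succ]
    linarith [hω.seq_add_le hq hq01 (Nat.zero_le N) N.le_succ]

/-- The intervals `[q j, q (j + 2)]` with `j` of one parity are non-overlapping, so each parity
class contributes at most `ω (q 0) (q (N + 1))`. -/
theorem sum_skip_le (hω : Superadditive ω) (hq : Monotone q) (hq01 : ∀ i, q i ∈ Set.Icc 0 1)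
    (N : ℕ) : ∑ j ∈ range N, ω (q j) (q (j + 2)) ≤ 2 * ω (q 0) (q (N + 1)) := by
  suffices h : ∀ q : ℕ → ℝ, Monotone q → (∀ i, q i ∈ Set.Icc 0 1) →
      ∑ j ∈ range N, ω (q j) (q (j + 2)) ≤ ω (q 0) (q (N + 1)) + ω (q 1) (q (N + 1)) by
    linarith [h q hq hq01, hω.seq_add_le hq hq01 zero_le_one (by omega : 1 ≤ N + 1),
      hω.seq_nonneg hq hq01 zero_le_one]
  induction N using Nat.twoStepInduction with
  | zero =>
    intro q hq hq01
    simpa using add_nonneg (hω.seq_nonneg hq hq01 zero_le_one) (hω.seq_nonneg hq hq01 le_rfl)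
  | one => intro q hq hq01; simpa using hω.seq_nonneg hq hq01 one_le_two
  | more N ih =>
    intro q hq hq01
    have hshift := ih (fun i => q (i + 2)) (fun _ _ h => hq (by omega)) (fun i => hq01 _)
    simp only [sum_range_succ' _ (N + 1), sum_range_succ' _ N]
    have h0 := hω.seq_add_le hq hq01 (by omega : 0 ≤ 2) (by omega : 2 ≤ N + 3)
    have h1 := hω.seq_add_le hq hq01 (by omega : 1 ≤ 3) (by omega : 3 ≤ N + 3)
    simp only [zero_add] at hshift h0 h1 ⊢
    linarith

theorem exists_skip_le (hω : Superadditive ω) (hq : Monotone q) (hq01 : ∀ i, q i ∈ Set.Icc 0 1)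
    {N : ℕ} (hN : 1 ≤ N) : ∃ j < N, ω (q j) (q (j + 2)) ≤ 2 / N * ω (q 0) (q (N + 1)) := by
  have hsum : ∑ j ∈ range N, ω (q j) (q (j + 2)) ≤ ∑ _j ∈ range N, 2 / N * ω (q 0) (q (N + 1)) := by
    rw [sum_const, card_range, nsmul_eq_mul, ← mul_assoc, mul_div_cancel₀ _ (by positivity)]
    exact hω.sum_skip_le hq hq01 N
  obtain ⟨j, hj, hle⟩ := exists_le_of_sum_le (nonempty_range_iff.2 (by omega)) hsum
  exact ⟨j, mem_range.1 hj, hle⟩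

theorem sum_rpow_le (hω : Superadditive ω) (hq : Monotone q) (hq01 : ∀ i, q i ∈ Set.Icc 0 1)
    {θ η : ℝ} (hθ : 1 ≤ θ) (hη : 0 ≤ η) {N : ℕ} (hsmall : ∀ i < N, ω (q i) (q (i + 1)) ≤ η) :
    ∑ i ∈ range N, ω (q i) (q (i + 1)) ^ θ ≤ η ^ (θ - 1) * ω (q 0) (q N) :=
  calc ∑ i ∈ range N, ω (q i) (q (i + 1)) ^ θ
      ≤ ∑ i ∈ range N, η ^ (θ - 1) * ω (q i) (q (i + 1)) :=
        sum_le_sum fun i hi => rpow_le_rpow_sub_one_mul (hω.seq_nonneg hq hq01 i.le_succ)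
          (hsmall i (mem_range.1 hi)) hθ
    _ ≤ η ^ (θ - 1) * ω (q 0) (q N) := by
        rw [← mul_sum]; gcongr; exact hω.sum_le hq hq01 N

end Superadditive

variable {E : Type*} [NormedAddCommGroup E]

def partitionSum (μ : ℝ → ℝ → E) (q : ℕ → ℝ) (N : ℕ) : E :=
  ∑ i ∈ range N, μ (q (i + 1)) (q i)

theorem partitionSum_eq_skip_add (μ : ℝ → ℝ → E) (q : ℕ → ℝ) {j N : ℕ} (hj : j < N) :
    partitionSum μ q (N + 1) = partitionSum μ (fun i => q (if i ≤ j then i else i + 1)) N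
      + (μ (q (j + 2)) (q (j + 1)) + μ (q (j + 1)) (q j) - μ (q (j + 2)) (q j)) := by
  set q' : ℕ → ℝ := fun i => q (if i ≤ j then i else i + 1)
  have hlow : ∀ i ≤ j, q' i = q i := fun i hi => by simp [q', hi]
  have hhigh : ∀ i, j < i → q' i = q (i + 1) := fun i hi => by simp [q', hi.not_ge]
  obtain ⟨m, rfl⟩ : ∃ m, N = j + 1 + m := ⟨N - (j + 1), by omega⟩
  have hbefore : ∑ i ∈ range j, μ (q' (i + 1)) (q' i) = ∑ i ∈ range j, μ (q (i + 1)) (q i) :=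
    sum_congr rfl fun i hi => by
      rw [hlow i (mem_range.1 hi).le, hlow (i + 1) (mem_range.1 hi)]
  have hafter : ∑ k ∈ range m, μ (q' (j + 1 + k + 1)) (q' (j + 1 + k))
      = ∑ k ∈ range m, μ (q (j + 2 + k + 1)) (q (j + 2 + k)) :=
    sum_congr rfl fun k _ => by
      rw [hhigh _ (by omega), hhigh _ (by omega)]
      ring_nf
  rw [show j + 1 + m + 1 = j + 2 + m by omega]
  simp only [partitionSum, sum_range_add, sum_range_succ, hbefore, hafter, hlow j le_rfl,
    hhigh (j + 1) (by omega)]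
  abel

theorem partitionSum_mul (μ : ℝ → ℝ → E) (q : ℕ → ℝ) (a K : ℕ) :
    partitionSum μ q (a * K) = ∑ j ∈ range a, partitionSum μ (fun i => q (j * K + i)) K := by
  induction a with
  | zero => simp [partitionSum]
  | succ a ih =>
    rw [sum_range_succ, ← ih, Nat.succ_mul, partitionSum, sum_range_add]
    rfl

def AlmostAdditive (μ : ℝ → ℝ → E) (ω : ℝ → ℝ → ℝ) (c θ : ℝ) : Prop :=
  ∀ s u t : ℝ, 0 ≤ s → s ≤ u → u ≤ t → t ≤ 1 → ‖μ t s - (μ t u + μ u s)‖ ≤ c * ω s t ^ θ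

/-- The `r = 0` term is `(2 / 0) ^ θ = 0 ^ θ`, which vanishes for `θ ≠ 0`. -/
noncomputable def youngConst (θ : ℝ) : ℝ := ∑' r : ℕ, (2 / r : ℝ) ^ θ

theorem sum_le_youngConst {θ : ℝ} (hθ : 1 < θ) (N : ℕ) :
    ∑ r ∈ range N, (2 / r : ℝ) ^ θ ≤ youngConst θ := by
  have hsum : Summable fun r : ℕ => (2 / r : ℝ) ^ θ := by
    refine ((Real.summable_one_div_nat_rpow.2 hθ).mul_left (2 ^ θ)).congr fun r => ?_
    rw [Real.div_rpow zero_le_two r.cast_nonneg, mul_one_div]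
  exact hsum.sum_le_tsum _ fun r _ => by positivity

namespace AlmostAdditive

variable {μ : ℝ → ℝ → E} {ω : ℝ → ℝ → ℝ} {c θ s : ℝ} {q : ℕ → ℝ}

theorem apply_self (hμ : AlmostAdditive μ ω c θ) (hω : Superadditive ω) (hθ : θ ≠ 0)
    (h0 : 0 ≤ s) (h1 : s ≤ 1) : μ s s = 0 := by
  have h := hμ s s s h0 le_rfl le_rfl h1
  rw [hω.self_eq_zero h0 h1, Real.zero_rpow hθ, mul_zero,
    show μ s s - (μ s s + μ s s) = -μ s s by abel, norm_neg] at h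
  exact norm_le_zero_iff.1 h

theorem norm_split_le (hμ : AlmostAdditive μ ω c θ) (hω : Superadditive ω) (hc : 0 ≤ c)
    (hθ : θ ≠ 0) {a b u : ℝ} (ha : 0 ≤ a) (hab : a ≤ b) (hb : b ≤ 1) (hu0 : 0 ≤ u)
    (hu1 : u ≤ 1) :
    ‖μ (min u b) (min u a) + μ (max u b) (max u a) - μ b a‖ ≤ c * ω a b ^ θ := by
  have hbound : 0 ≤ c * ω a b ^ θ := by have := hω.nonneg a b ha hab hb; positivity
  rcases le_total u a with hua | hau
  · rw [min_eq_left hua, min_eq_left (hua.trans hab), max_eq_right hua,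
      max_eq_right (hua.trans hab), hμ.apply_self hω hθ hu0 hu1]
    simpa using hbound
  rcases le_total u b with hub | hbu
  · rw [min_eq_left hub, min_eq_right hau, max_eq_right hub, max_eq_left hau]
    calc _ = ‖μ b a - (μ b u + μ u a)‖ := by rw [← norm_neg]; congr 1; abel
      _ ≤ _ := hμ a u b ha hau hub hb
  · rw [min_eq_right hbu, min_eq_right (hab.trans hbu), max_eq_left hbu,
      max_eq_left (hab.trans hbu), hμ.apply_self hω hθ hu0 hu1]
    simpa using hbound

/-- Young's argument: among `N + 1` intervals some `q (j + 1)` has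
`ω (q j) (q (j + 2)) ≤ 2 ω (q 0) (q (N + 1)) / N`, so removing it moves the sum by at most
`c (2 / N) ^ θ ω ^ θ`; remove points one at a time. -/
theorem norm_partitionSum_sub_le (hμ : AlmostAdditive μ ω c θ) (hω : Superadditive ω)
    (hc : 0 ≤ c) (hθ : 0 ≤ θ) (hq : Monotone q) (hq01 : ∀ i, q i ∈ Set.Icc 0 1) {N : ℕ}
    (hN : 1 ≤ N) :
    ‖partitionSum μ q N - μ (q N) (q 0)‖
      ≤ c * (∑ r ∈ range N, (2 / r : ℝ) ^ θ) * ω (q 0) (q N) ^ θ := by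
  induction N, hN using Nat.le_induction generalizing q with
  | base =>
    simp only [partitionSum, range_one, sum_singleton, sub_self, norm_zero]
    have := hω.seq_nonneg hq hq01 zero_le_one
    positivity
  | succ N hN ih =>
    obtain ⟨j, hj, hskip⟩ := hω.exists_skip_le hq hq01 hN
    set q' : ℕ → ℝ := fun i => q (if i ≤ j then i else i + 1)
    have IH := ih (q := q') (fun a b h => hq (by split_ifs <;> omega)) (fun i => hq01 _)
    simp only [q', if_pos (Nat.zero_le j), if_neg (by omega : ¬ N ≤ j)] at IH
    set W := ω (q 0) (q (N + 1))
    have hdefect : ‖μ (q (j + 2)) (q (j + 1)) + μ (q (j + 1)) (q j) - μ (q (j + 2)) (q j)‖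
        ≤ c * (2 / N : ℝ) ^ θ * W ^ θ :=
      calc _ = ‖μ (q (j + 2)) (q j) - (μ (q (j + 2)) (q (j + 1)) + μ (q (j + 1)) (q j))‖ := by
            rw [← norm_neg]; congr 1; abel
        _ ≤ c * ω (q j) (q (j + 2)) ^ θ :=
            hμ _ _ _ (hq01 j).1 (hq (by omega)) (hq (by omega)) (hq01 _).2
        _ ≤ c * (2 / N * W) ^ θ := by
            have := hω.seq_nonneg hq hq01 (by omega : j ≤ j + 2)
            gcongr
        _ = c * (2 / N : ℝ) ^ θ * W ^ θ := by
            rw [Real.mul_rpow (by positivity) (hω.seq_nonneg hq hq01 (Nat.zero_le _)), mul_assoc]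
    rw [partitionSum_eq_skip_add μ q hj, sum_range_succ]
    calc _ = ‖(partitionSum μ q' N - μ (q (N + 1)) (q 0))
          + (μ (q (j + 2)) (q (j + 1)) + μ (q (j + 1)) (q j) - μ (q (j + 2)) (q j))‖ := by
          congr 1; abel
      _ ≤ _ := norm_add_le_of_le IH hdefect
      _ = _ := by ring

theorem norm_partitionSum_sub_le_youngConst (hμ : AlmostAdditive μ ω c θ)
    (hω : Superadditive ω) (hc : 0 ≤ c) (hθ : 1 < θ) (hq : Monotone q)
    (hq01 : ∀ i, q i ∈ Set.Icc 0 1) {N : ℕ} (hN : 1 ≤ N) :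
    ‖partitionSum μ q N - μ (q N) (q 0)‖ ≤ c * youngConst θ * ω (q 0) (q N) ^ θ := by
  refine (hμ.norm_partitionSum_sub_le hω hc (by linarith) hq hq01 hN).trans ?_
  have := hω.seq_nonneg hq hq01 (Nat.zero_le N)
  gcongr
  exact sum_le_youngConst hθ N

end AlmostAdditive

noncomputable def dyadicPoint (s t : ℝ) (n i : ℕ) : ℝ := min t (max s (i / 2 ^ n))

section dyadicPoint

variable {s t : ℝ}

theorem dyadicPoint_mono (s t : ℝ) (n : ℕ) : Monotone (dyadicPoint s t n) :=
  fun i j hij => by unfold dyadicPoint; gcongr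

theorem dyadicPoint_mem (hst : s ≤ t) (n i : ℕ) : dyadicPoint s t n i ∈ Set.Icc s t :=
  ⟨le_min hst (le_max_left _ _), min_le_left _ _⟩

theorem dyadicPoint_mem_Icc_zero_one (h0 : 0 ≤ s) (hst : s ≤ t) (ht1 : t ≤ 1) (n i : ℕ) :
    dyadicPoint s t n i ∈ Set.Icc 0 1 :=
  Set.Icc_subset_Icc h0 ht1 (dyadicPoint_mem hst n i)

theorem dyadicPoint_zero (h0 : 0 ≤ s) (hst : s ≤ t) (n : ℕ) : dyadicPoint s t n 0 = s := by
  simp [dyadicPoint, h0, hst]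

theorem dyadicPoint_two_pow (hst : s ≤ t) (ht1 : t ≤ 1) (n : ℕ) :
    dyadicPoint s t n (2 ^ n) = t := by
  simp [dyadicPoint, hst.trans ht1, ht1]

theorem dyadicPoint_succ_sub_le (s t : ℝ) (n i : ℕ) :
    dyadicPoint s t n (i + 1) - dyadicPoint s t n i ≤ (2 ^ n)⁻¹ := by
  have hstep : ((i + 1 : ℕ) : ℝ) / 2 ^ n - i / 2 ^ n = (2 ^ n)⁻¹ := by push_cast; ring
  have hle : (i : ℝ) / 2 ^ n ≤ ((i + 1 : ℕ) : ℝ) / 2 ^ n := by gcongr; omega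
  simp only [dyadicPoint, min_def, max_def]
  split_ifs <;> linarith

theorem dyadicPoint_mul_two_pow (s t : ℝ) {m n : ℕ} (hmn : m ≤ n) (j : ℕ) :
    dyadicPoint s t n (j * 2 ^ (n - m)) = dyadicPoint s t m j := by
  have h : (2 : ℝ) ^ n = 2 ^ m * 2 ^ (n - m) := by rw [← pow_add, Nat.add_sub_of_le hmn]
  simp only [dyadicPoint, Nat.cast_mul, Nat.cast_pow, Nat.cast_ofNat, h]
  rw [mul_div_mul_right _ _ (by positivity)]

theorem dyadicPoint_of_le_left {u : ℝ} (hut : u ≤ t) (n i : ℕ) :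
    dyadicPoint s u n i = min u (dyadicPoint s t n i) := by
  rw [dyadicPoint, dyadicPoint, ← min_assoc, min_eq_left hut]

theorem dyadicPoint_of_le_right {u : ℝ} (hsu : s ≤ u) (hut : u ≤ t) (n i : ℕ) :
    dyadicPoint u t n i = max u (dyadicPoint s t n i) := by
  rw [dyadicPoint, dyadicPoint, max_min_distrib_left, max_eq_right hut, ← max_assoc,
    max_eq_left hsu]

end dyadicPoint

noncomputable def dyadicSum (μ : ℝ → ℝ → E) (s t : ℝ) (n : ℕ) : E :=
  partitionSum μ (dyadicPoint s t n) (2 ^ n)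

noncomputable def dyadicVariation (ω : ℝ → ℝ → ℝ) (θ s t : ℝ) (n : ℕ) : ℝ :=
  ∑ i ∈ range (2 ^ n), ω (dyadicPoint s t n i) (dyadicPoint s t n (i + 1)) ^ θ

noncomputable def sewingMap (μ : ℝ → ℝ → E) (t : ℝ) : E := limUnder atTop (dyadicSum μ 0 t)

section dyadic

variable {ω : ℝ → ℝ → ℝ} {θ s t : ℝ}

theorem Superadditive.eventually_apply_dyadicPoint_le (hω : Superadditive ω)
    (hcont : ContinuousOn (fun q : ℝ × ℝ => ω q.1 q.2)
      {q : ℝ × ℝ | 0 ≤ q.1 ∧ q.1 ≤ q.2 ∧ q.2 ≤ 1})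
    (h0 : 0 ≤ s) (hst : s ≤ t) (ht1 : t ≤ 1) {ε : ℝ} (hε : 0 < ε) :
    ∀ᶠ n in atTop, ∀ i, ω (dyadicPoint s t n i) (dyadicPoint s t n (i + 1)) ≤ ε := by
  have hcompact : IsCompact {q : ℝ × ℝ | 0 ≤ q.1 ∧ q.1 ≤ q.2 ∧ q.2 ≤ 1} :=
    (isCompact_Icc.prod isCompact_Icc).of_isClosed_subset
      ((isClosed_le continuous_const continuous_fst).inter
        ((isClosed_le continuous_fst continuous_snd).inter
          (isClosed_le continuous_snd continuous_const)))
      fun q ⟨h1, h2, h3⟩ => ⟨⟨h1, h2.trans h3⟩, ⟨h1.trans h2, h3⟩⟩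
  obtain ⟨δ, hδ, huc⟩ := Metric.uniformContinuousOn_iff_le.1
    (hcompact.uniformContinuousOn_of_continuous hcont) ε hε
  have hmesh : ∀ᶠ n : ℕ in atTop, ((2 : ℝ) ^ n)⁻¹ ≤ δ :=
    (tendsto_inv_atTop_zero.comp (tendsto_pow_atTop_atTop_of_one_lt one_lt_two)).eventually
      (ge_mem_nhds hδ)
  filter_upwards [hmesh] with n hn i
  obtain ⟨ha0, -⟩ := dyadicPoint_mem_Icc_zero_one h0 hst ht1 n i
  obtain ⟨-, hb1⟩ := dyadicPoint_mem_Icc_zero_one h0 hst ht1 n (i + 1)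
  have hab := dyadicPoint_mono s t n i.le_succ
  have hdist : dist (dyadicPoint s t n i, dyadicPoint s t n (i + 1))
      (dyadicPoint s t n i, dyadicPoint s t n i) ≤ δ := by
    rw [Prod.dist_eq, dist_self, Real.dist_eq, abs_of_nonneg (by linarith)]
    exact max_le hδ.le ((dyadicPoint_succ_sub_le s t n i).trans hn)
  have := huc _ ⟨ha0, hab, hb1⟩ _ ⟨ha0, le_rfl, hab.trans hb1⟩ hdist
  rwa [hω.self_eq_zero ha0 (hab.trans hb1), Real.dist_eq, sub_zero,
    abs_of_nonneg (hω.nonneg _ _ ha0 hab hb1)] at this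

theorem Superadditive.dyadicVariation_le (hω : Superadditive ω) (hθ : 1 ≤ θ) (h0 : 0 ≤ s)
    (hst : s ≤ t) (ht1 : t ≤ 1) {η : ℝ} (hη : 0 ≤ η) {n : ℕ}
    (hsmall : ∀ i, ω (dyadicPoint s t n i) (dyadicPoint s t n (i + 1)) ≤ η) :
    dyadicVariation ω θ s t n ≤ η ^ (θ - 1) * ω s t := by
  have := hω.sum_rpow_le (dyadicPoint_mono s t n) (dyadicPoint_mem_Icc_zero_one h0 hst ht1 n)
    hθ hη (N := 2 ^ n) fun i _ => hsmall i
  rwa [dyadicPoint_zero h0 hst, dyadicPoint_two_pow hst ht1] at this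

theorem Superadditive.tendsto_dyadicVariation (hω : Superadditive ω)
    (hcont : ContinuousOn (fun q : ℝ × ℝ => ω q.1 q.2)
      {q : ℝ × ℝ | 0 ≤ q.1 ∧ q.1 ≤ q.2 ∧ q.2 ≤ 1})
    (hθ : 1 < θ) (h0 : 0 ≤ s) (hst : s ≤ t) (ht1 : t ≤ 1) :
    Tendsto (dyadicVariation ω θ s t) atTop (𝓝 0) := by
  refine tendsto_order.2 ⟨fun a ha => Eventually.of_forall fun n => ha.trans_le ?_, fun ε hε => ?_⟩
  · exact sum_nonneg fun i _ => Real.rpow_nonneg (hω.seq_nonneg (dyadicPoint_mono s t n)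
      (dyadicPoint_mem_Icc_zero_one h0 hst ht1 n) i.le_succ) θ
  have hpow : Tendsto (fun η : ℝ => η ^ (θ - 1) * ω s t) (𝓝[>] 0) (𝓝 0) := by
    have := ((Real.continuousAt_rpow_const 0 (θ - 1) (Or.inr (by linarith))).tendsto.mul_const
      (ω s t)).mono_left (nhdsWithin_le_nhds (s := Set.Ioi 0))
    rwa [Real.zero_rpow (by linarith), zero_mul] at this
  obtain ⟨η, hηε, hη⟩ := ((hpow.eventually (gt_mem_nhds hε)).and self_mem_nhdsWithin).exists
  filter_upwards [hω.eventually_apply_dyadicPoint_le hcont h0 hst ht1 hη] with n hn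
  exact (hω.dyadicVariation_le hθ.le h0 hst ht1 hη.le hn).trans_lt hηε

theorem Superadditive.apply_eq_of_norm_sub_le (hω : Superadditive ω)
    (hcont : ContinuousOn (fun q : ℝ × ℝ => ω q.1 q.2)
      {q : ℝ × ℝ | 0 ≤ q.1 ∧ q.1 ≤ q.2 ∧ q.2 ≤ 1})
    (hθ : 1 < θ) {g : ℝ → E} {D : ℝ}
    (hg : ∀ s t : ℝ, 0 ≤ s → s ≤ t → t ≤ 1 → ‖g t - g s‖ ≤ D * ω s t ^ θ)
    (h0 : 0 ≤ s) (hst : s ≤ t) (ht1 : t ≤ 1) : g s = g t := by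
  have hle : ∀ n, ‖g t - g s‖ ≤ D * dyadicVariation ω θ s t n := fun n =>
    calc ‖g t - g s‖
        = ‖∑ i ∈ range (2 ^ n), (g (dyadicPoint s t n (i + 1)) - g (dyadicPoint s t n i))‖ := by
          rw [sum_range_sub (fun i => g (dyadicPoint s t n i)), dyadicPoint_two_pow hst ht1,
            dyadicPoint_zero h0 hst]
      _ ≤ D * dyadicVariation ω θ s t n := by
          rw [dyadicVariation, mul_sum]
          exact (norm_sum_le _ _).trans (sum_le_sum fun i _ =>
            hg _ _ (dyadicPoint_mem_Icc_zero_one h0 hst ht1 n i).1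
              (dyadicPoint_mono s t n i.le_succ) (dyadicPoint_mem_Icc_zero_one h0 hst ht1 n _).2)
  have hzero : ‖g t - g s‖ ≤ 0 := by
    simpa using ge_of_tendsto' ((hω.tendsto_dyadicVariation hcont hθ h0 hst ht1).const_mul D) hle
  exact (sub_eq_zero.1 (norm_le_zero_iff.1 hzero)).symm

end dyadic

namespace AlmostAdditive

variable {μ : ℝ → ℝ → E} {ω : ℝ → ℝ → ℝ} {c θ s t : ℝ}

theorem norm_dyadicSum_add_sub_le (hμ : AlmostAdditive μ ω c θ) (hω : Superadditive ω)
    (hc : 0 ≤ c) (hθ : θ ≠ 0) {u : ℝ} (h0 : 0 ≤ s) (hsu : s ≤ u) (hut : u ≤ t) (ht1 : t ≤ 1)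
    (n : ℕ) :
    ‖dyadicSum μ s u n + dyadicSum μ u t n - dyadicSum μ s t n‖
      ≤ c * dyadicVariation ω θ s t n := by
  simp only [dyadicSum, partitionSum, dyadicVariation, dyadicPoint_of_le_left hut,
    dyadicPoint_of_le_right hsu hut, ← sum_add_distrib, ← sum_sub_distrib, mul_sum]
  refine (norm_sum_le _ _).trans (sum_le_sum fun i _ => ?_)
  have hst := hsu.trans hut
  exact hμ.norm_split_le hω hc hθ (dyadicPoint_mem_Icc_zero_one h0 hst ht1 n i).1
    (dyadicPoint_mono s t n i.le_succ) (dyadicPoint_mem_Icc_zero_one h0 hst ht1 n _).2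
    (h0.trans hsu) (hut.trans ht1)

theorem norm_dyadicSum_sub_le (hμ : AlmostAdditive μ ω c θ) (hω : Superadditive ω) (hc : 0 ≤ c)
    (hθ : 1 < θ) (h0 : 0 ≤ s) (hst : s ≤ t) (ht1 : t ≤ 1) (n : ℕ) :
    ‖dyadicSum μ s t n - μ t s‖ ≤ c * youngConst θ * ω s t ^ θ := by
  have := hμ.norm_partitionSum_sub_le_youngConst hω hc hθ (dyadicPoint_mono s t n)
    (dyadicPoint_mem_Icc_zero_one h0 hst ht1 n) n.one_le_two_pow
  rwa [dyadicPoint_zero h0 hst, dyadicPoint_two_pow hst ht1] at this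

theorem norm_dyadicSum_sub_dyadicSum_le (hμ : AlmostAdditive μ ω c θ) (hω : Superadditive ω)
    (hc : 0 ≤ c) (hθ : 1 < θ) (h0 : 0 ≤ s) (hst : s ≤ t) (ht1 : t ≤ 1) {m n : ℕ} (hmn : m ≤ n) :
    ‖dyadicSum μ s t n - dyadicSum μ s t m‖ ≤ c * youngConst θ * dyadicVariation ω θ s t m := by
  set K := 2 ^ (n - m)
  rw [dyadicSum, dyadicSum, show 2 ^ n = 2 ^ m * K by rw [← pow_add, Nat.add_sub_of_le hmn],
    partitionSum_mul, partitionSum, ← sum_sub_distrib, dyadicVariation, mul_sum]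
  refine (norm_sum_le _ _).trans (sum_le_sum fun j _ => ?_)
  have := hμ.norm_partitionSum_sub_le_youngConst hω hc hθ
    (q := fun i => dyadicPoint s t n (j * K + i)) (fun a b h => dyadicPoint_mono s t n (by omega))
    (fun i => dyadicPoint_mem_Icc_zero_one h0 hst ht1 n _) (N := K) Nat.one_le_two_pow
  rwa [add_zero, ← Nat.succ_mul, dyadicPoint_mul_two_pow s t hmn,
    dyadicPoint_mul_two_pow s t hmn] at this

theorem sewingMap_zero (hμ : AlmostAdditive μ ω c θ) (hω : Superadditive ω) (hθ : θ ≠ 0) :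
    sewingMap μ 0 = 0 := by
  have hpoint : ∀ n i, dyadicPoint 0 0 n i = 0 := fun n i =>
    le_antisymm (dyadicPoint_mem le_rfl n i).2 (dyadicPoint_mem le_rfl n i).1
  have hsum : dyadicSum μ 0 0 = fun _ => 0 := funext fun n => by
    simp [dyadicSum, partitionSum, hpoint, hμ.apply_self hω hθ le_rfl zero_le_one]
  rw [sewingMap, hsum]
  exact tendsto_const_nhds.limUnder_eq

variable [CompleteSpace E]

theorem tendsto_sewingMap (hμ : AlmostAdditive μ ω c θ) (hω : Superadditive ω)
    (hcont : ContinuousOn (fun q : ℝ × ℝ => ω q.1 q.2)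
      {q : ℝ × ℝ | 0 ≤ q.1 ∧ q.1 ≤ q.2 ∧ q.2 ≤ 1})
    (hc : 0 ≤ c) (hθ : 1 < θ) (ht0 : 0 ≤ t) (ht1 : t ≤ 1) :
    Tendsto (dyadicSum μ 0 t) atTop (𝓝 (sewingMap μ t)) := by
  have hV := (hω.tendsto_dyadicVariation hcont hθ le_rfl ht0 ht1).const_mul (c * youngConst θ)
  rw [mul_zero] at hV
  refine (cauchySeq_of_le_tendsto_0' _ (fun m n hmn => ?_) hV).tendsto_limUnder
  rw [dist_comm, dist_eq_norm]
  exact hμ.norm_dyadicSum_sub_dyadicSum_le hω hc hθ le_rfl ht0 ht1 hmn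

theorem norm_sewingMap_sub_sub_le (hμ : AlmostAdditive μ ω c θ) (hω : Superadditive ω)
    (hcont : ContinuousOn (fun q : ℝ × ℝ => ω q.1 q.2)
      {q : ℝ × ℝ | 0 ≤ q.1 ∧ q.1 ≤ q.2 ∧ q.2 ≤ 1})
    (hc : 0 ≤ c) (hθ : 1 < θ) (h0 : 0 ≤ s) (hst : s ≤ t) (ht1 : t ≤ 1) :
    ‖sewingMap μ t - sewingMap μ s - μ t s‖ ≤ c * youngConst θ * ω s t ^ θ := by
  have hlim := (((hμ.tendsto_sewingMap hω hcont hc hθ (h0.trans hst) ht1).sub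
    (hμ.tendsto_sewingMap hω hcont hc hθ h0 (hst.trans ht1))).sub_const (μ t s)).norm
  have hbound := ((hω.tendsto_dyadicVariation hcont hθ le_rfl (h0.trans hst) ht1).const_mul
    c).const_add (c * youngConst θ * ω s t ^ θ)
  rw [mul_zero, add_zero] at hbound
  refine le_of_tendsto_of_tendsto' hlim hbound fun n => ?_
  calc ‖dyadicSum μ 0 t n - dyadicSum μ 0 s n - μ t s‖
      = ‖(dyadicSum μ s t n - μ t s)
          - (dyadicSum μ 0 s n + dyadicSum μ s t n - dyadicSum μ 0 t n)‖ := by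
        congr 1; abel
    _ ≤ c * youngConst θ * ω s t ^ θ + c * dyadicVariation ω θ 0 t n :=
        norm_sub_le_of_le (hμ.norm_dyadicSum_sub_le hω hc hθ h0 hst ht1 n)
          (hμ.norm_dyadicSum_add_sub_le hω hc (by linarith) le_rfl h0 hst ht1 n)

end AlmostAdditive

end Sewing

open Sewing

theorem sewing_lemma_with_control_general
    {E : Type*} [NormedAddCommGroup E] [CompleteSpace E]
    (θ c₁ : ℝ) (hθ : 1 < θ) (hc₁ : 0 < c₁)
    (ω : ℝ → ℝ → ℝ)
    (hω_cont : ContinuousOn (fun q : ℝ × ℝ => ω q.1 q.2)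
      {q : ℝ × ℝ | 0 ≤ q.1 ∧ q.1 ≤ q.2 ∧ q.2 ≤ 1})
    (hω_nonneg : ∀ s t : ℝ, 0 ≤ s → s ≤ t → t ≤ 1 → 0 ≤ ω s t)
    (hω_super : ∀ s u t : ℝ, 0 ≤ s → s ≤ u → u ≤ t → t ≤ 1 → ω s u + ω u t ≤ ω s t)
    (μ : ℝ → ℝ → E)
    (hμ : ∀ s u t : ℝ, 0 ≤ s → s ≤ u → u ≤ t → t ≤ 1 →
      ‖μ t s - (μ t u + μ u s)‖ ≤ c₁ * ω s t ^ θ) :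
    ∃ C : ℝ, ∃ φ : ℝ → E, φ 0 = 0 ∧
      (∀ s t : ℝ, 0 ≤ s → s ≤ t → t ≤ 1 → ‖φ t - φ s - μ t s‖ ≤ C * ω s t ^ θ) ∧
      ∀ ψ₁ ψ₂ : ℝ → E, ψ₁ 0 = 0 → ψ₂ 0 = 0 →
        (∃ C₁ : ℝ, ∀ s t : ℝ, 0 ≤ s → s ≤ t → t ≤ 1 →
          ‖ψ₁ t - ψ₁ s - μ t s‖ ≤ C₁ * ω s t ^ θ) →
        (∃ C₂ : ℝ, ∀ s t : ℝ, 0 ≤ s → s ≤ t → t ≤ 1 →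
          ‖ψ₂ t - ψ₂ s - μ t s‖ ≤ C₂ * ω s t ^ θ) →
        ∀ t : ℝ, 0 ≤ t → t ≤ 1 → ψ₁ t = ψ₂ t := by
  have hω : Superadditive ω := ⟨hω_nonneg, hω_super⟩
  have hμ' : AlmostAdditive μ ω c₁ θ := hμ
  refine ⟨c₁ * youngConst θ, sewingMap μ, hμ'.sewingMap_zero hω (by linarith),
    fun s t => hμ'.norm_sewingMap_sub_sub_le hω hω_cont hc₁.le hθ, ?_⟩
  rintro ψ₁ ψ₂ hψ₁ hψ₂ ⟨C₁, hC₁⟩ ⟨C₂, hC₂⟩ t ht0 ht1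
  have hdiff : ∀ s t : ℝ, 0 ≤ s → s ≤ t → t ≤ 1 →
      ‖(ψ₁ - ψ₂) t - (ψ₁ - ψ₂) s‖ ≤ (C₁ + C₂) * ω s t ^ θ := fun s t h0 hst ht1 =>
    calc ‖(ψ₁ - ψ₂) t - (ψ₁ - ψ₂) s‖
        = ‖(ψ₁ t - ψ₁ s - μ t s) - (ψ₂ t - ψ₂ s - μ t s)‖ := by
          rw [Pi.sub_apply, Pi.sub_apply]; congr 1; abel
      _ ≤ (C₁ + C₂) * ω s t ^ θ := by
          rw [add_mul]; exact norm_sub_le_of_le (hC₁ s t h0 hst ht1) (hC₂ s t h0 hst ht1)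
  have := hω.apply_eq_of_norm_sub_le hω_cont hθ hdiff le_rfl ht0 ht1
  rwa [Pi.sub_apply, Pi.sub_apply, hψ₁, hψ₂, sub_zero, eq_comm, sub_eq_zero] at this

/-- **Sewing lemma with a control.** Given a control `ω` on `[0,1]` (continuous, vanishing on
the diagonal, superadditive, nonnegative) and a family `μ` with values in a Banach space that is
almost additive with respect to `ω^θ` for some `θ > 1`, there is a constant `C` and a unique
function `φ` vanishing at `0` whose increments are approximated by `μ` up to `C ω(s,t)^θ`. -/
theorem sewing_lemma_with_control
    {E : Type*} [NormedAddCommGroup E] [NormedSpace ℝ E] [CompleteSpace E]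
    (θ c₁ : ℝ) (hθ : 1 < θ) (hc₁ : 0 < c₁)
    (ω : ℝ → ℝ → ℝ)
    (hω_cont : ContinuousOn (fun q : ℝ × ℝ => ω q.1 q.2)
      {q : ℝ × ℝ | 0 ≤ q.1 ∧ q.1 ≤ q.2 ∧ q.2 ≤ 1})
    (hω_nonneg : ∀ s t : ℝ, 0 ≤ s → s ≤ t → t ≤ 1 → 0 ≤ ω s t)
    (hω_diag : ∀ s : ℝ, 0 ≤ s → s ≤ 1 → ω s s = 0)
    (hω_super : ∀ s u t : ℝ, 0 ≤ s → s ≤ u → u ≤ t → t ≤ 1 → ω s u + ω u t ≤ ω s t)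
    (μ : ℝ → ℝ → E)
    (hμ : ∀ s u t : ℝ, 0 ≤ s → s ≤ u → u ≤ t → t ≤ 1 →
      ‖μ t s - (μ t u + μ u s)‖ ≤ c₁ * ω s t ^ θ) :
    ∃ C : ℝ, ∃ φ : ℝ → E, φ 0 = 0 ∧
      (∀ s t : ℝ, 0 ≤ s → s ≤ t → t ≤ 1 → ‖φ t - φ s - μ t s‖ ≤ C * ω s t ^ θ) ∧
      ∀ ψ₁ ψ₂ : ℝ → E, ψ₁ 0 = 0 → ψ₂ 0 = 0 →
        (∃ C₁ : ℝ, ∀ s t : ℝ, 0 ≤ s → s ≤ t → t ≤ 1 →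
          ‖ψ₁ t - ψ₁ s - μ t s‖ ≤ C₁ * ω s t ^ θ) →
        (∃ C₂ : ℝ, ∀ s t : ℝ, 0 ≤ s → s ≤ t → t ≤ 1 →
          ‖ψ₂ t - ψ₂ s - μ t s‖ ≤ C₂ * ω s t ^ θ) →
        ∀ t : ℝ, 0 ≤ t → t ≤ 1 → ψ₁ t = ψ₂ t :=
  sewing_lemma_with_control_general θ c₁ hθ hc₁ ω hω_cont hω_nonneg hω_super μ hμ
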